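/- arXiv:2502.04741 — 6 statements merged into one kernel-verified Lean document; each statement's English description precedes it below -/
import Mathlib

section
/- For every positive integer k and every m ≥ k, the maximum number of columns of an m-rowed simple (0,1)-matrix containing no configuration of K_k (the k × 2^k matrix of all distinct (0,1)-columns) equals the sum of binomial(m, i) for i from 0 to k-1. -/
open Finset

/-- `F` is a configuration in the simple matrix `A` (columns of `A` form a finset):
there is an injection of rows such that the multiset `F` of columns is a sub-multiset
of the restricted columns of `A`. -/
def ConfigIn {s k m : ℕ} (F : Multiset (Fin k → Fin s)) (A : Finset (Fin m → Fin s)) : Prop :=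
  ∃ ρ : Fin k ↪ Fin m, F ≤ A.1.map (fun col => col ∘ ρ)

/-- The forbidden number: the maximum number of columns of an `m`-rowed simple
`s`-matrix avoiding `F` as a configuration. -/
noncomputable def forb (m s : ℕ) {k : ℕ} (F : Multiset (Fin k → Fin s)) : ℕ :=
  sSup {n : ℕ | ∃ A : Finset (Fin m → Fin s), ¬ ConfigIn F A ∧ A.card = n}

/-- The 2-rowed configuration with `a` columns (0,0), `b` columns (1,0),
`c` columns (0,1) and `d` columns (1,1), viewed as a 3-matrix. -/
def Fabcd (a b c d : ℕ) : Multiset (Fin 2 → Fin 3) :=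
  Multiset.replicate a ![0, 0] + Multiset.replicate b ![1, 0] +
  Multiset.replicate c ![0, 1] + Multiset.replicate d ![1, 1]

/-- `p` copies of `K₂`. -/
def pK2 (p : ℕ) : Multiset (Fin 2 → Fin 3) := Fabcd p p p p

/-- `p` copies of `I₂`. -/
def pI2 (p : ℕ) : Multiset (Fin 2 → Fin 3) := Fabcd 0 p p 0

/-!
Identify a (0,1)-column with its support, a subset of the rows. A set of rows carries a copy of
`K_k` exactly when it is a `k`-set shattered by the supports, so a matrix avoiding `K_k` has no
shattered set of size `k` and Pajor's form of the Sauer–Shelah lemma bounds its number of columns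
by the number of sets of size less than `k`. All columns with fewer than `k` ones attain the
bound: none of them restricts to the all-ones column on `k` rows.
-/

def supportEquiv (m : ℕ) : (Fin m → Fin 2) ≃ Finset (Fin m) where
  toFun f := {i | f i = 1}
  invFun s i := if i ∈ s then 1 else 0
  left_inv f := funext fun i => by
    by_cases h : f i = 1
    · simp [h]
    · simp only [mem_filter, mem_univ, true_and, h, ite_false]; omega
  right_inv s := by ext; simp

@[simp]
lemma mem_supportEquiv {m : ℕ} {f : Fin m → Fin 2} {i : Fin m} :
    i ∈ supportEquiv m f ↔ f i = 1 := by
  simp [supportEquiv]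

lemma card_filter_card_lt {α : Type*} [Fintype α] [DecidableEq α] (k : ℕ) :
    #{s : Finset α | #s < k} = ∑ i ∈ range k, (Fintype.card α).choose i := by
  rw [card_eq_sum_card_fiberwise (f := card) (t := range k) fun s hs => by simpa using hs]
  refine sum_congr rfl fun i hi => ?_
  rw [← card_univ, ← card_powersetCard, filter_filter]
  congr 1
  ext s
  simp only [mem_filter, mem_univ, true_and, mem_powersetCard_univ]
  exact and_iff_right_of_imp fun hs => hs ▸ mem_range.1 hi

lemma configIn_univ_iff {k m s : ℕ} {A : Finset (Fin m → Fin s)} :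
    ConfigIn (univ : Finset (Fin k → Fin s)).val A ↔
      ∃ ρ : Fin k ↪ Fin m, ∀ g : Fin k → Fin s, ∃ f ∈ A, f ∘ ρ = g := by
  simp [ConfigIn, Multiset.le_iff_subset (univ : Finset (Fin k → Fin s)).nodup,
    Multiset.subset_iff]

lemma configIn_univ_of_shatters {k m : ℕ} {A : Finset (Fin m → Fin 2)} {t : Finset (Fin m)}
    (ht : (A.image (supportEquiv m)).Shatters t) (htk : #t = k) :
    ConfigIn (univ : Finset (Fin k → Fin 2)).val A := by
  let ρ : Fin k ↪o Fin m := t.orderEmbOfFin htk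
  refine configIn_univ_iff.2 ⟨ρ.toEmbedding, fun g => ?_⟩
  have hρt : ∀ j, ρ j ∈ t := t.orderEmbOfFin_mem htk
  obtain ⟨u, hu, htu⟩ := ht (t := (supportEquiv k g).map ρ.toEmbedding)
    (fun x hx => by obtain ⟨j, -, rfl⟩ := mem_map.1 hx; exact hρt j)
  obtain ⟨f, hf, rfl⟩ := mem_image.1 hu
  refine ⟨f, hf, (supportEquiv k).injective (ext fun j => ?_)⟩
  have hj := congrArg (ρ j ∈ ·) htu
  simp only [mem_inter, hρt, true_and, mem_supportEquiv, mem_map] at hj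
  simp [hj]

lemma card_le_sum_choose_of_not_configIn {k m : ℕ} {A : Finset (Fin m → Fin 2)}
    (hA : ¬ ConfigIn (univ : Finset (Fin k → Fin 2)).val A) :
    #A ≤ ∑ i ∈ range k, m.choose i := by
  calc #A = #(A.image (supportEquiv m)) := (card_image_of_injective _ (Equiv.injective _)).symm
    _ ≤ #(A.image (supportEquiv m)).shatterer := card_le_card_shatterer _
    _ ≤ #{s : Finset (Fin m) | #s < k} := card_le_card fun s hs => by
        refine mem_filter.2 ⟨mem_univ _, lt_of_not_ge fun hks => hA ?_⟩
        obtain ⟨t, hts, htk⟩ := exists_subset_card_eq hks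
        exact configIn_univ_of_shatters ((mem_shatterer.1 hs).mono_right hts) htk
    _ = ∑ i ∈ range k, m.choose i := by rw [card_filter_card_lt, Fintype.card_fin]

lemma not_configIn_univ_filter_card_lt (k m : ℕ) :
    ¬ ConfigIn (univ : Finset (Fin k → Fin 2)).val {f | #(supportEquiv m f) < k} := by
  rw [configIn_univ_iff]
  rintro ⟨ρ, hρ⟩
  obtain ⟨f, hf, hfρ⟩ := hρ 1
  have hsub : univ.map ρ ⊆ supportEquiv m f := fun x hx => by
    obtain ⟨j, -, rfl⟩ := mem_map.1 hx
    simpa using congrFun hfρ j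
  exact (mem_filter.1 hf).2.not_ge (by simpa using card_le_card hsub)

lemma card_filter_card_supportEquiv_lt (k m : ℕ) :
    #{f : Fin m → Fin 2 | #(supportEquiv m f) < k} = ∑ i ∈ range k, m.choose i := by
  rw [card_equiv (supportEquiv m) (t := {s | #s < k}) (by simp), card_filter_card_lt,
    Fintype.card_fin]

lemma forb_eq_of_forall_le_of_exists {m s k n : ℕ} {F : Multiset (Fin k → Fin s)}
    (hle : ∀ A : Finset (Fin m → Fin s), ¬ ConfigIn F A → #A ≤ n)
    (hA : ∃ A : Finset (Fin m → Fin s), ¬ ConfigIn F A ∧ #A = n) :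
    forb m s F = n :=
  IsGreatest.csSup_eq ⟨hA, by rintro _ ⟨A, hA, rfl⟩; exact hle A hA⟩

theorem sauer_shelah_general (k m : ℕ) :
    forb m 2 ((Finset.univ : Finset (Fin k → Fin 2)).val) =
      ∑ i ∈ Finset.range k, Nat.choose m i :=
  forb_eq_of_forall_le_of_exists (fun _ => card_le_sum_choose_of_not_configIn)
    ⟨_, not_configIn_univ_filter_card_lt k m, card_filter_card_supportEquiv_lt k m⟩

/-- Sauer–Shelah–Vapnik–Chervonenkis: `forb(m, K_k) = ∑_{i<k} C(m,i)`. -/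
theorem sauer_shelah (k m : ℕ) (hk : 1 ≤ k) (hm : k ≤ m) :
    forb m 2 ((Finset.univ : Finset (Fin k → Fin 2)).val) =
      ∑ i ∈ Finset.range k, Nat.choose m i :=
  sauer_shelah_general k m
end

section
/- For all m ≥ 2 with 2^(m-2) ≥ p-1, forb(m, 3, p·K_2) = 2^m + m·2^(m-1) + (p-1)·binom(m,2). -/
open Finset

/-! For each pair of rows, a matrix avoiding `p • K₂` shows one of the four (0,1)-patterns in
fewer than `p` columns; fix such a pattern for every pair. Columns showing none of the fixed
patterns are few: among those whose rows different from `2` form the set `Z`, the sets of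
`1`-rows form a family on `Z` that shatters no pair, so by the Sauer–Shelah lemma (Pajor's
form) there are at most `#Z + 1` of them, and `∑ Z, (#Z + 1) = 2 ^ m + m * 2 ^ (m - 1)`. Every
other column shows a fixed pattern, which happens at most `p - 1` times per pair.

Conversely, all columns with at most one `1`, together with `p - 1` columns whose `1`-rows are
exactly `s` for each pair `s`, show `(1, 1)` on every pair at most `p - 1` times. -/

section Shatter

variable {α : Type*} [DecidableEq α]

lemma card_le_card_add_one_of_not_shatters_pair {𝒜 : Finset (Finset α)} {Z : Finset α}
    (hZ : ∀ t ∈ 𝒜, t ⊆ Z) (h𝒜 : ∀ s : Finset α, #s = 2 → ¬ 𝒜.Shatters s) :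
    #𝒜 ≤ #Z + 1 := by
  have hsub : 𝒜.shatterer ⊆ insert ∅ (Z.image singleton) := by
    intro s hs
    rw [mem_shatterer] at hs
    have hsZ : s ⊆ Z := by
      obtain ⟨t, ht, hst⟩ := hs.exists_superset
      exact hst.trans (hZ t ht)
    have hs1 : #s ≤ 1 := by
      by_contra! h2
      obtain ⟨t, hts, ht⟩ := exists_subset_card_eq h2
      exact h𝒜 t ht (hs.mono_right hts)
    rcases Nat.le_one_iff_eq_zero_or_eq_one.1 hs1 with h0 | h1
    · simp [card_eq_zero.1 h0]
    · obtain ⟨a, rfl⟩ := card_eq_one.1 h1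
      simpa using hsZ
  calc #𝒜 ≤ #𝒜.shatterer := card_le_card_shatterer 𝒜
    _ ≤ #(insert ∅ (Z.image singleton)) := card_le_card hsub
    _ ≤ #Z + 1 := (card_insert_le _ _).trans (by gcongr; exact card_image_le)

end Shatter

lemma fin_three_eq_of_iff {x y : Fin 3} (h1 : x = 1 ↔ y = 1) (h2 : x = 2 ↔ y = 2) : x = y := by
  revert x y
  decide

section Columns

variable {α : Type*} [Fintype α]

lemma sum_finset_card_add_one :
    ∑ Z : Finset α, (#Z + 1) = 2 ^ Fintype.card α + Fintype.card α * 2 ^ (Fintype.card α - 1) := by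
  rw [← powerset_univ, sum_powerset_apply_card (· + 1), card_univ, ← Nat.sum_range_choose,
    ← Nat.sum_range_mul_choose, ← sum_add_distrib]
  exact sum_congr rfl fun k _ => by rw [smul_eq_mul]; ring

variable [DecidableEq α]

lemma card_filter_ones_eq (s : Finset α) :
    #{c : α → Fin 3 | ({i | c i = 1} : Finset α) = s} = 2 ^ (Fintype.card α - #s) := by
  have hpi : ({c : α → Fin 3 | ({i | c i = 1} : Finset α) = s} : Finset _) =
      Fintype.piFinset fun i => if i ∈ s then {1} else {0, 2} := by
    ext c
    simp only [mem_filter, mem_univ, true_and, Fintype.mem_piFinset, Finset.ext_iff]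
    refine forall_congr' fun i => ?_
    split_ifs with hi
    · simp [hi]
    · simp only [hi, iff_false, mem_insert, mem_singleton]
      generalize c i = x
      revert x
      decide
  rw [hpi, Fintype.card_piFinset]
  simp [apply_ite, prod_ite, filter_notMem_eq_sdiff, card_sdiff]

/-- `φ s` is the pattern fixed for the pair of rows `s`; only its values on `s` matter. -/
def avoiders (φ : Finset α → α → Fin 3) : Finset (α → Fin 3) :=
  {c | ∀ s : Finset α, #s = 2 → ∃ i ∈ s, c i ≠ φ s i}

lemma card_avoiders_le (φ : Finset α → α → Fin 3) (hφ : ∀ s i, φ s i ≠ 2) :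
    #(avoiders φ) ≤ ∑ Z : Finset α, (#Z + 1) := by
  let nonTwo (c : α → Fin 3) : Finset α := {i | c i ≠ 2}
  let ones (c : α → Fin 3) : Finset α := {i | c i = 1}
  rw [card_eq_sum_card_fiberwise (f := nonTwo) (t := univ) fun _ _ => mem_univ _]
  refine sum_le_sum fun Z _ => ?_
  set fiber : Finset (α → Fin 3) := {c ∈ avoiders φ | nonTwo c = Z}
  have hinj : Set.InjOn ones fiber := by
    intro c hc c' hc' h
    simp only [fiber, coe_filter, Set.mem_ofPred_eq] at hc hc'
    have h2 := hc.2.trans hc'.2.symm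
    funext i
    apply fin_three_eq_of_iff
    · simpa [ones] using congrArg (i ∈ ·) h
    · simpa [nonTwo, not_iff_not] using congrArg (i ∈ ·) h2
  have hones : ∀ c ∈ fiber, ones c ⊆ Z := by
    intro c hc i
    simp only [fiber, mem_filter] at hc
    rw [← hc.2]
    simp +contextual [ones, nonTwo]
  rw [← card_image_of_injOn hinj]
  refine card_le_card_add_one_of_not_shatters_pair (by simpa using hones) fun s hs hshat => ?_
  have hsZ : s ⊆ Z := by
    obtain ⟨_, hu, hsu⟩ := hshat.exists_superset
    obtain ⟨c, hc, rfl⟩ := mem_image.1 hu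
    exact hsu.trans (hones c hc)
  -- shattering `s` would produce a column of the fibre showing the pattern `φ s` on `s`
  obtain ⟨_, hu, hsu⟩ := hshat (filter_subset (φ s · = 1) s)
  obtain ⟨c, hc, rfl⟩ := mem_image.1 hu
  simp only [fiber, avoiders, mem_filter, mem_univ, true_and] at hc
  obtain ⟨i, hi, hci⟩ := hc.1 s hs
  refine hci (fin_three_eq_of_iff ?_ ?_)
  · simpa [ones, hi] using congrArg (i ∈ ·) hsu
  · have hiZ := hsZ hi
    rw [← hc.2] at hiZ
    simpa [nonTwo, hφ] using hiZ

theorem card_le_of_card_pattern_le (A : Finset (α → Fin 3)) (φ : Finset α → α → Fin 3)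
    (hφ : ∀ s i, φ s i ≠ 2) (q : ℕ)
    (hA : ∀ s : Finset α, #s = 2 → #{c ∈ A | ∀ i ∈ s, c i = φ s i} ≤ q) :
    #A ≤ 2 ^ Fintype.card α + Fintype.card α * 2 ^ (Fintype.card α - 1) +
      q * (Fintype.card α).choose 2 := by
  have hcover : A ⊆ avoiders φ ∪
      (powersetCard 2 univ).biUnion fun s => {c ∈ A | ∀ i ∈ s, c i = φ s i} := by
    intro c hc
    by_cases hgood : ∀ s : Finset α, #s = 2 → ∃ i ∈ s, c i ≠ φ s i
    · exact mem_union_left _ (by simpa [avoiders] using hgood)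
    · push Not at hgood
      obtain ⟨s, hs, hcs⟩ := hgood
      exact mem_union_right _ (mem_biUnion.2 ⟨s, by simpa using hs, mem_filter.2 ⟨hc, hcs⟩⟩)
  calc #A ≤ _ := card_le_card hcover
    _ ≤ _ := card_union_le _ _
    _ ≤ ∑ Z : Finset α, (#Z + 1) + ∑ s ∈ powersetCard 2 univ, q := by
      gcongr
      · exact card_avoiders_le φ hφ
      · exact card_biUnion_le.trans (sum_le_sum fun s hs => hA s (mem_powersetCard.1 hs).2)
    _ = _ := by
      rw [sum_finset_card_add_one, sum_const, card_powersetCard, card_univ, smul_eq_mul, mul_comm q]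

lemma card_filter_pair_ones_le {T : Finset α → Finset (α → Fin 3)}
    (hones : ∀ s, ∀ c ∈ T s, ({i | c i = 1} : Finset α) = s) (hT : ∀ s, 2 < #s → T s = ∅)
    {i j : α} (hij : i ≠ j) :
    #{c ∈ univ.biUnion T | c i = 1 ∧ c j = 1} ≤ #(T {i, j}) := by
  refine card_le_card fun c hc => ?_
  simp only [mem_filter, mem_biUnion, mem_univ, true_and] at hc
  obtain ⟨⟨s, hcs⟩, hci, hcj⟩ := hc
  have hpair : {i, j} ⊆ s := by
    rw [← hones s c hcs]
    simp [insert_subset_iff, hci, hcj]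
  have hs2 : #s ≤ 2 := by
    by_contra! hs
    simp [hT s hs] at hcs
  rwa [eq_of_subset_of_card_le hpair (by rw [card_pair hij]; exact hs2)]

end Columns

section pK2

variable {m p : ℕ}

lemma count_pK2 (y : Fin 2 → Fin 3) :
    (pK2 p).count y = if y 0 ≠ 2 ∧ y 1 ≠ 2 then p else 0 := by
  obtain ⟨a, b, rfl⟩ : ∃ a b : Fin 3, y = ![a, b] := ⟨y 0, y 1, by ext i; fin_cases i <;> rfl⟩
  fin_cases a <;> fin_cases b <;> simp [pK2, Fabcd, Multiset.count_replicate]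

lemma count_map_comp {k : ℕ} (A : Finset (Fin m → Fin 3)) (ρ : Fin k → Fin m)
    (y : Fin k → Fin 3) : (A.1.map (· ∘ ρ)).count y = #{c ∈ A | c ∘ ρ = y} := by
  simp only [Multiset.count_map, card_def, filter_val, eq_comm]

lemma configIn_pK2_iff (A : Finset (Fin m → Fin 3)) :
    ConfigIn (pK2 p) A ↔ ∃ ρ : Fin 2 ↪ Fin m, ∀ a b : Fin 3, a ≠ 2 → b ≠ 2 →
      p ≤ #{c ∈ A | c (ρ 0) = a ∧ c (ρ 1) = b} := by
  have hpair (ρ : Fin 2 ↪ Fin m) (c : Fin m → Fin 3) (y : Fin 2 → Fin 3) :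
      c ∘ ρ = y ↔ c (ρ 0) = y 0 ∧ c (ρ 1) = y 1 := by
    simp [funext_iff, Fin.forall_fin_two]
  refine exists_congr fun ρ => ?_
  simp only [Multiset.le_iff_count, count_pK2, count_map_comp, hpair]
  constructor
  · intro h a b ha hb
    simpa [ha, hb] using h ![a, b]
  · intro h y
    split_ifs with hy
    · exact h _ _ hy.1 hy.2
    · exact Nat.zero_le _

lemma exists_pattern_of_not_configIn {A : Finset (Fin m → Fin 3)}
    (hA : ¬ ConfigIn (pK2 p) A) (s : Finset (Fin m)) :
    ∃ φ : Fin m → Fin 3, (∀ i, φ i ≠ 2) ∧ (#s = 2 → #{c ∈ A | ∀ i ∈ s, c i = φ i} ≤ p - 1) := by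
  by_cases hs : #s = 2
  · obtain ⟨i, j, hij, rfl⟩ := card_eq_two.1 hs
    let ρ : Fin 2 ↪ Fin m :=
      ⟨![i, j], by intro a b; fin_cases a <;> fin_cases b <;> simp [hij, hij.symm]⟩
    rw [configIn_pK2_iff] at hA
    push Not at hA
    obtain ⟨a, b, ha, hb, hlt⟩ := hA ρ
    have hlt' : #{c ∈ A | c i = a ∧ c j = b} < p := hlt
    refine ⟨fun k => if k = i then a else b, fun k => ?_, fun _ => ?_⟩
    · dsimp only
      split_ifs <;> assumption
    · simpa [hij.symm, Nat.le_sub_one_iff_lt (Nat.zero_lt_of_lt hlt)] using hlt'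
  · exact ⟨0, fun _ => by simp, fun h => absurd h hs⟩

theorem card_le_of_not_configIn_pK2 (A : Finset (Fin m → Fin 3)) (hA : ¬ ConfigIn (pK2 p) A) :
    #A ≤ 2 ^ m + m * 2 ^ (m - 1) + (p - 1) * m.choose 2 := by
  choose φ hφ hcard using exists_pattern_of_not_configIn hA
  -- `convert` only reconciles the decidability instances of the two filters
  simpa using card_le_of_card_pattern_le A φ hφ (p - 1) fun s hs => by convert hcard s hs

lemma not_configIn_pK2_of_card_le {A : Finset (Fin m → Fin 3)} (hp : 1 ≤ p)
    (hA : ∀ i j, i ≠ j → #{c ∈ A | c i = 1 ∧ c j = 1} ≤ p - 1) : ¬ ConfigIn (pK2 p) A := by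
  rw [configIn_pK2_iff]
  rintro ⟨ρ, hρ⟩
  have := (hρ 1 1 (by decide) (by decide)).trans (hA _ _ (ρ.injective.ne (by decide)))
  omega

theorem exists_card_eq_not_configIn_pK2 (hp : 1 ≤ p) (hm : 2 ≤ m) (h : p - 1 ≤ 2 ^ (m - 2)) :
    ∃ A : Finset (Fin m → Fin 3), ¬ ConfigIn (pK2 p) A ∧
      #A = 2 ^ m + m * 2 ^ (m - 1) + (p - 1) * m.choose 2 := by
  let quota (k : ℕ) : ℕ := if k ≤ 1 then 2 ^ (m - k) else if k = 2 then p - 1 else 0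
  have hT (s : Finset (Fin m)) :
      ∃ T ⊆ ({c : Fin m → Fin 3 | ({i | c i = 1} : Finset (Fin m)) = s} : Finset _),
        #T = quota #s := by
    apply exists_subset_card_eq
    rw [card_filter_ones_eq, Fintype.card_fin]
    by_cases h1 : #s ≤ 1
    · simp [quota, h1]
    · by_cases h2 : #s = 2
      · simpa [quota, h2] using h
      · simp [quota, h1, h2]
  choose T hTsub hTcard using hT
  have hones (s : Finset (Fin m)) (c : Fin m → Fin 3) (hc : c ∈ T s) :
      ({i | c i = 1} : Finset (Fin m)) = s :=
    (mem_filter.1 (hTsub s hc)).2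
  refine ⟨univ.biUnion T, not_configIn_pK2_of_card_le hp fun i j hij => ?_, ?_⟩
  · have hTij : #(T {i, j}) = p - 1 := by simp [hTcard, quota, card_pair hij]
    refine (card_filter_pair_ones_le hones (fun s hs => ?_) hij).trans hTij.le
    simp [← card_eq_zero, hTcard, quota, hs.ne', show 1 < #s by omega]
  · rw [card_biUnion fun s _ s' _ hss' =>
      disjoint_left.2 fun c hc hc' => hss' ((hones s c hc).symm.trans (hones s' c hc'))]
    simp only [hTcard]
    rw [← powerset_univ, sum_powerset_apply_card quota, card_univ, Fintype.card_fin]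
    obtain ⟨n, rfl⟩ := Nat.exists_eq_add_of_le' hm
    simp [sum_range_succ', quota]
    ring

end pK2

theorem forb_pK2 (m p : ℕ) (hp : 1 ≤ p) (hm : 2 ≤ m) (h : p - 1 ≤ 2 ^ (m - 2)) :
    forb m 3 (pK2 p) = 2 ^ m + m * 2 ^ (m - 1) + (p - 1) * Nat.choose m 2 := by
  obtain ⟨A, hA, hcard⟩ := exists_card_eq_not_configIn_pK2 hp hm h
  refine IsGreatest.csSup_eq ⟨⟨A, hA, hcard⟩, ?_⟩
  rintro _ ⟨B, hB, rfl⟩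
  exact card_le_of_not_configIn_pK2 B hB
end

section
/- Let r ≥ 1 and let T_r be the triangular array with entries T_r(i,j) = r + 2 − i − j for i ∈ [r], j ∈ [r+1−i]. Suppose nonnegative integers a_1,...,a_r (row operation counts) and b_1,...,b_r (column operation counts) are given, let N = ∑a_i + ∑b_j, and let M be the number of pairs (i,j) with i ∈ [r], j ∈ [r+1−i] such that a_i + b_j ≥ r + 2 − i − j. Then M − N ≤ binom(r+1,2) − N_r = ⌊r²/4⌋, where N_r = binom(⌈r/2⌉+1, 2) + binom(⌊r/2⌋+1, 2). -/
/-!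
Split the cells cleared by the operations into three kinds: those cleared by the row
operations alone, those cleared by the column operations alone, and the rest. Row `i` clears
at most `a i` cells by itself and column `j` at most `b j`, which together cost at most `N`.
A remaining cell `(i, j)` is read as the edge `{i, r + 1 - j}` of a graph on `[1, r]`; this graph
is triangle-free, so by Mantel's theorem there are at most `⌊r²/4⌋` such cells.
-/

open Finset

theorem Finset.card_le_sq_div_four_of_triangleFree {α : Type*} [LinearOrder α]
    (s : Finset α) (E : Finset (α × α)) (hE : ∀ e ∈ E, e.1 ∈ s ∧ e.2 ∈ s ∧ e.1 < e.2)
    (hfree : ∀ u v w, (u, v) ∈ E → (v, w) ∈ E → (u, w) ∉ E) :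
    #E ≤ #s ^ 2 / 4 := by
  classical
  let G : SimpleGraph s := SimpleGraph.fromRel fun u v => ((u : α), (v : α)) ∈ E
  have hG : G.CliqueFree 3 := by
    intro t ht
    obtain ⟨u, v, w, huv, huw, hvw, -⟩ := SimpleGraph.is3Clique_iff.mp ht
    simp only [G, SimpleGraph.fromRel_adj] at huv huw hvw
    have hlt : ∀ x y, (x, y) ∈ E → x < y := fun x y h => (hE _ h).2.2
    grind
  have hcard : #E ≤ #G.edgeFinset := by
    refine card_le_card_of_surjOn (fun z : Sym2 s => ((z.inf : α), (z.sup : α))) ?_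
    intro e he
    obtain ⟨h1, h2, h12⟩ := hE e he
    refine ⟨s(⟨e.1, h1⟩, ⟨e.2, h2⟩), ?_, ?_⟩
    · simpa [G, h12.ne] using Or.inl he
    · simp [h12.le]
  have hturan := hG.card_edgeFinset_le (r := 2)
  simp only [Fintype.card_coe] at hturan
  have : (#s % 2).choose 2 = 0 := Nat.choose_eq_zero_of_lt (Nat.mod_lt _ two_pos)
  calc #E ≤ (#s ^ 2 - (#s % 2) ^ 2) * (2 - 1) / (2 * 2) + (#s % 2).choose 2 := hcard.trans hturan
    _ = (#s ^ 2 - (#s % 2) ^ 2) / 4 := by norm_num [this]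
    _ ≤ #s ^ 2 / 4 := Nat.div_le_div_right (Nat.sub_le _ _)

theorem Finset.card_filter_product {α β : Type*} (s : Finset α) (t : Finset β)
    (p : α × β → Prop) [DecidablePred p] :
    #((s ×ˢ t).filter p) = ∑ x ∈ s, #(t.filter fun y => p (x, y)) := by
  simp only [card_filter, sum_product]

theorem Finset.card_filter_product_right {α β : Type*} (s : Finset α) (t : Finset β)
    (p : α × β → Prop) [DecidablePred p] :
    #((s ×ˢ t).filter p) = ∑ y ∈ t, #(s.filter fun x => p (x, y)) := by
  simp only [card_filter, sum_product_right]

theorem Finset.card_filter_le_of_forall_lt_add_le {t : Finset ℕ} {p : ℕ → Prop} [DecidablePred p]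
    {c m : ℕ} (h : ∀ x ∈ t, p x → c < x + m ∧ x ≤ c) : #(t.filter p) ≤ m := by
  calc #(t.filter p) ≤ #(Icc (c + 1 - m) c) :=
        card_le_card fun x hx => by
          obtain ⟨hxt, hpx⟩ := mem_filter.mp hx
          have := h x hxt hpx
          exact mem_Icc.mpr ⟨by omega, this.2⟩
    _ ≤ m := by rw [Nat.card_Icc]; omega

namespace TriangularArray

variable (r : ℕ) (a b : ℕ → ℕ)

def rowCleared : Finset (ℕ × ℕ) :=
  (Icc 1 r ×ˢ Icc 1 r).filter fun ij => ij.1 + ij.2 ≤ r + 1 ∧ r + 2 ≤ a ij.1 + ij.1 + ij.2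

def colCleared : Finset (ℕ × ℕ) :=
  (Icc 1 r ×ˢ Icc 1 r).filter fun ij => ij.1 + ij.2 ≤ r + 1 ∧ r + 2 ≤ b ij.2 + ij.1 + ij.2

def jointlyCleared : Finset (ℕ × ℕ) :=
  (Icc 1 r ×ˢ Icc 1 r).filter fun ij => r + 2 ≤ a ij.1 + b ij.2 + ij.1 + ij.2 ∧
    a ij.1 + ij.1 + ij.2 ≤ r + 1 ∧ b ij.2 + ij.1 + ij.2 ≤ r + 1

theorem card_rowCleared_le : #(rowCleared r a) ≤ ∑ i ∈ Icc 1 r, a i := by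
  rw [rowCleared, card_filter_product]
  refine sum_le_sum fun i _ => card_filter_le_of_forall_lt_add_le (c := r + 1 - i) ?_
  intro j _ hj
  dsimp only at hj
  omega

theorem card_colCleared_le : #(colCleared r b) ≤ ∑ j ∈ Icc 1 r, b j := by
  rw [colCleared, card_filter_product_right]
  refine sum_le_sum fun j _ => card_filter_le_of_forall_lt_add_le (c := r + 1 - j) ?_
  intro i _ hi
  dsimp only at hi
  omega

theorem mem_jointlyCleared {i j : ℕ} : (i, j) ∈ jointlyCleared r a b ↔
    ((1 ≤ i ∧ i ≤ r) ∧ 1 ≤ j ∧ j ≤ r) ∧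
      r + 2 ≤ a i + b j + i + j ∧ a i + i + j ≤ r + 1 ∧ b j + i + j ≤ r + 1 := by
  simp only [jointlyCleared, mem_filter, mem_product, mem_Icc]

theorem card_jointlyCleared_le : #(jointlyCleared r a b) ≤ r ^ 2 / 4 := by
  have hmem {i j} := (mem_jointlyCleared r a b (i := i) (j := j)).mp
  set E := (jointlyCleared r a b).image fun ij => (ij.1, r + 1 - ij.2)
  have hE : ∀ {u v}, (u, v) ∈ E → v ≤ r ∧ (u, r + 1 - v) ∈ jointlyCleared r a b := by
    intro u v h
    obtain ⟨⟨i, j⟩, hij, huv⟩ := mem_image.mp h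
    obtain ⟨rfl, rfl⟩ := Prod.mk.inj huv
    have := hmem hij
    refine ⟨by omega, ?_⟩
    rwa [show r + 1 - (r + 1 - j) = j by omega]
  have hinj : Set.InjOn (fun ij : ℕ × ℕ => (ij.1, r + 1 - ij.2)) (jointlyCleared r a b) := by
    rintro ⟨i, j⟩ hij ⟨i', j'⟩ hij' h
    have := hmem hij
    have := hmem hij'
    simp only [Prod.mk.injEq] at h ⊢
    omega
  have key := card_le_sq_div_four_of_triangleFree (Icc 1 r) E ?_ ?_
  · rwa [Nat.card_Icc, Nat.add_sub_cancel, card_image_of_injOn hinj] at key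
  · rintro ⟨u, v⟩ h
    obtain ⟨hv, h⟩ := hE h
    have := hmem h
    simp only [mem_Icc]
    omega
  · -- `a u ≤ v - u` from the edge `(u, v)` and `b (r + 1 - w) ≤ w - v` from `(v, w)` leave
    -- too little for the cell of `(u, w)` to be cleared.
    intro u v w huv hvw huw
    obtain ⟨-, huv⟩ := hE huv
    obtain ⟨hw, hvw⟩ := hE hvw
    obtain ⟨-, huw⟩ := hE huw
    have := hmem huv
    have := hmem hvw
    have := hmem huw
    omega

def cleared : Finset (ℕ × ℕ) :=
  (Icc 1 r ×ˢ Icc 1 r).filter fun ij =>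
    ij.1 + ij.2 ≤ r + 1 ∧ r + 2 ≤ a ij.1 + b ij.2 + ij.1 + ij.2

theorem cleared_subset :
    cleared r a b ⊆ rowCleared r a ∪ colCleared r b ∪ jointlyCleared r a b := by
  intro ij h
  simp only [cleared, rowCleared, colCleared, jointlyCleared, mem_union, mem_filter,
    mem_product, mem_Icc] at h ⊢
  omega

theorem card_cleared_le :
    #(cleared r a b) ≤ ∑ i ∈ Icc 1 r, a i + ∑ j ∈ Icc 1 r, b j + r ^ 2 / 4 :=
  calc #(cleared r a b) ≤ #(rowCleared r a ∪ colCleared r b ∪ jointlyCleared r a b) :=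
        card_le_card (cleared_subset r a b)
    _ ≤ #(rowCleared r a) + #(colCleared r b) + #(jointlyCleared r a b) :=
        (card_union_le _ _).trans (by gcongr; exact card_union_le _ _)
    _ ≤ _ := by
        gcongr
        · exact card_rowCleared_le r a
        · exact card_colCleared_le r b
        · exact card_jointlyCleared_le r a b

end TriangularArray

theorem M_minus_N_general (r : ℕ) (a b : ℕ → ℕ) :
    (((((Finset.Icc 1 r) ×ˢ (Finset.Icc 1 r)).filter (fun ij =>
          ij.1 + ij.2 ≤ r + 1 ∧ r + 2 ≤ a ij.1 + b ij.2 + ij.1 + ij.2)).card : ℤ)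
        - ((∑ i ∈ Finset.Icc 1 r, a i + ∑ j ∈ Finset.Icc 1 r, b j : ℕ) : ℤ))
      ≤ ((r ^ 2 / 4 : ℕ) : ℤ) := by
  have := TriangularArray.card_cleared_le r a b
  rw [TriangularArray.cleared] at this
  rw [sub_le_iff_le_add, ← Nat.cast_add, Nat.cast_le]
  omega

theorem M_minus_N (r : ℕ) (hr : 1 ≤ r) (a b : ℕ → ℕ) :
    (((((Finset.Icc 1 r) ×ˢ (Finset.Icc 1 r)).filter (fun ij =>
          ij.1 + ij.2 ≤ r + 1 ∧ r + 2 ≤ a ij.1 + b ij.2 + ij.1 + ij.2)).card : ℤ)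
        - ((∑ i ∈ Finset.Icc 1 r, a i + ∑ j ∈ Finset.Icc 1 r, b j : ℕ) : ℤ))
      ≤ ((r ^ 2 / 4 : ℕ) : ℤ) :=
  M_minus_N_general r a b
end

section
/- Let r ≥ 1 and let T_r(i,j) = r + 2 − i − j for i ∈ [r], j ∈ [r+1−i]. If nonnegative integers a_1,...,a_r and b_1,...,b_r satisfy a_i + b_j ≥ r + 1 − i − j for all i ∈ [r] and j ∈ [r+1−i] (i.e., all entries become at most 1 after the operations), then ∑_{i=1}^r a_i + ∑_{j=1}^r b_j ≥ N_r − ⌈r/2⌉, where N_r = binom(⌈r/2⌉+1, 2) + binom(⌊r/2⌋+1, 2). -/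
open Finset

/-!
Only the diagonal constraints matter: for `i ≤ ⌈r/2⌉` the entry `(i, i)` lies in the triangle,
so `a i + b i ≥ r + 1 - 2 i`. Summing these gives `⌈r/2⌉ ⌊r/2⌋`, which is exactly
`N_r - ⌈r/2⌉`.
-/

lemma sum_Icc_sub_two_mul {r q : ℕ} (hq : 2 * q ≤ r + 1) :
    ∑ i ∈ Icc 1 q, (r + 1 - 2 * i) = q * (r - q) := by
  induction q with
  | zero => simp
  | succ q ih =>
    rw [sum_Icc_succ_top (by omega), ih (by omega)]
    obtain ⟨k, rfl⟩ : ∃ k, r = 2 * q + 1 + k := ⟨r - (2 * q + 1), by omega⟩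
    rw [show 2 * q + 1 + k - q = q + 1 + k by omega,
      show 2 * q + 1 + k + 1 - 2 * (q + 1) = k by omega,
      show 2 * q + 1 + k - (q + 1) = q + k by omega]
    ring

lemma choose_ceil_half_add_choose_floor_half_sub (r : ℕ) :
    ((r + 1) / 2 + 1).choose 2 + (r / 2 + 1).choose 2 - (r + 1) / 2 = (r + 1) / 2 * (r / 2) := by
  have two_mul_choose (n : ℕ) : (n + 1).choose 2 * 2 = (n + 1) * n := by
    rw [← Nat.add_one_mul_choose_eq, Nat.choose_one_right]
  rcases Nat.even_or_odd' r with ⟨p, rfl | rfl⟩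
  · rw [show (2 * p + 1) / 2 = p by omega, show 2 * p / 2 = p by omega]
    have := two_mul_choose p
    ring_nf at this ⊢
    omega
  · rw [show (2 * p + 1 + 1) / 2 = p + 1 by omega, show (2 * p + 1) / 2 = p by omega]
    have h₁ := two_mul_choose (p + 1)
    have h₂ := two_mul_choose p
    ring_nf at h₁ h₂ ⊢
    omega

theorem ops_lower_bound_general (r : ℕ) (a b : ℕ → ℕ)
    (h : ∀ i ∈ Finset.Icc 1 r, ∀ j ∈ Finset.Icc 1 (r + 1 - i),
      r + 1 ≤ a i + b j + i + j) :
    Nat.choose ((r + 1) / 2 + 1) 2 + Nat.choose (r / 2 + 1) 2 - (r + 1) / 2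
      ≤ ∑ i ∈ Finset.Icc 1 r, a i + ∑ j ∈ Finset.Icc 1 r, b j := by
  set q := (r + 1) / 2
  have hqr : q ≤ r := by omega
  have hdiag : ∀ i ∈ Icc 1 q, r + 1 - 2 * i ≤ a i + b i := by
    intro i hi
    rw [mem_Icc] at hi
    have := h i (mem_Icc.2 ⟨hi.1, by omega⟩) i (mem_Icc.2 ⟨hi.1, by omega⟩)
    omega
  calc _ = q * (r / 2) := choose_ceil_half_add_choose_floor_half_sub r
    _ = ∑ i ∈ Icc 1 q, (r + 1 - 2 * i) := by rw [sum_Icc_sub_two_mul (by omega)]; congr 1; omega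
    _ ≤ ∑ i ∈ Icc 1 q, (a i + b i) := sum_le_sum hdiag
    _ = ∑ i ∈ Icc 1 q, a i + ∑ i ∈ Icc 1 q, b i := sum_add_distrib
    _ ≤ _ := by gcongr

theorem ops_lower_bound (r : ℕ) (hr : 1 ≤ r) (a b : ℕ → ℕ)
    (h : ∀ i ∈ Finset.Icc 1 r, ∀ j ∈ Finset.Icc 1 (r + 1 - i),
      r + 1 ≤ a i + b j + i + j) :
    Nat.choose ((r + 1) / 2 + 1) 2 + Nat.choose (r / 2 + 1) 2 - (r + 1) / 2
      ≤ ∑ i ∈ Finset.Icc 1 r, a i + ∑ j ∈ Finset.Icc 1 r, b j :=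
  ops_lower_bound_general r a b h
end

section
/- Let r ≥ 1, N_r = binom(⌈r/2⌉+1, 2) + binom(⌊r/2⌋+1, 2), and let 0 ≤ t ≤ ⌈r/2⌉. Suppose nonnegative integers a_1,...,a_r, b_1,...,b_r satisfy ∑a_i + ∑b_j = N_r − t and a_i + b_j ≥ r + 1 − i − j for all i ∈ [r], j ∈ [r+1−i]. Then the number of pairs (i,j) with i ∈ [r], j ∈ [r+1−i] and a_i + b_j = r + 1 − i − j (exactly weakly fixed pairs, i.e., entries left equal to exactly 1) is at least t·(⌊r/2⌋ + 1). -/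
open Finset

/-! Choose `u + v = r + 1` with `u ≤ a i + i` and `v ≤ b j + j` for all `i, j`; the hypothesis
applied at a minimiser of `a i + i` provides such a split. Row `i ≤ u` then contributes at
least `u + 1 - i` to `∑ a`, one less when it is tight (`a i + i = u`), so
`u (u + 1) ≤ 2 (∑ a + p)` with `p` the number of tight rows; likewise `v (v + 1) ≤ 2 (∑ b + q)`
for tight columns. A tight row and a tight column always meet in a weakly fixed entry, so it
remains to see `t (⌊r/2⌋ + 1) ≤ p q`. The budget `∑ a + ∑ b = N_r - t` forces `p + q` to be
large, and with `p ≤ u`, `q ≤ v` the product `p q` is smallest at a corner, where the bound is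
an explicit quadratic inequality. -/

def tightIndices (f : ℕ → ℕ) (u : ℕ) : Finset ℕ := {i ∈ Icc 1 u | f i + i = u}

def weaklyFixed (r : ℕ) (a b : ℕ → ℕ) : Finset (ℕ × ℕ) :=
  (Icc 1 r ×ˢ Icc 1 r).filter fun ij =>
    ij.1 + ij.2 ≤ r + 1 ∧ a ij.1 + b ij.2 + ij.1 + ij.2 = r + 1

theorem two_mul_sum_Icc_one_id (n : ℕ) : 2 * ∑ i ∈ Icc 1 n, i = n * (n + 1) := by
  induction n with
  | zero => simp
  | succ n ih => rw [sum_Icc_succ_top (by omega), mul_add, ih]; ring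

theorem two_mul_choose_two_succ (n : ℕ) : 2 * (n + 1).choose 2 = (n + 1) * n := by
  rw [Nat.choose_two_right, Nat.add_sub_cancel, mul_comm (n + 1)]
  exact Nat.two_mul_div_two_of_even (Nat.even_mul_succ_self n)

theorem card_tightIndices_le (f : ℕ → ℕ) (u : ℕ) : #(tightIndices f u) ≤ u :=
  (card_filter_le _ _).trans (by simp)

theorem mul_succ_le_two_mul_sum_add_card_tightIndices (f : ℕ → ℕ) {r u : ℕ} (hur : u ≤ r)
    (hf : ∀ i ∈ Icc 1 r, u ≤ f i + i) :
    u * (u + 1) ≤ 2 * (∑ i ∈ Icc 1 r, f i + #(tightIndices f u)) := by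
  have hsub : Icc 1 u ⊆ Icc 1 r := Icc_subset_Icc_right hur
  have hpoint : ∀ i ∈ Icc 1 u, u + 1 ≤ f i + (if f i + i = u then 1 else 0) + i := by
    intro i hi
    have := hf i (hsub hi)
    split_ifs <;> omega
  have hsum : u * (u + 1) ≤ ∑ i ∈ Icc 1 u, f i + #(tightIndices f u) + ∑ i ∈ Icc 1 u, i := by
    rw [tightIndices, card_filter, ← sum_add_distrib, ← sum_add_distrib]
    simpa using sum_le_sum hpoint
  have hmono : ∑ i ∈ Icc 1 u, f i ≤ ∑ i ∈ Icc 1 r, f i := sum_le_sum_of_subset hsub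
  have := two_mul_sum_Icc_one_id u
  omega

theorem exists_tight_split {r : ℕ} {a b : ℕ → ℕ} (hr : 1 ≤ r)
    (h : ∀ i ∈ Icc 1 r, ∀ j ∈ Icc 1 (r + 1 - i), r + 1 ≤ a i + b j + i + j) :
    ∃ u v, 1 ≤ u ∧ 1 ≤ v ∧ u + v = r + 1 ∧
      (∀ i ∈ Icc 1 r, u ≤ a i + i) ∧ ∀ j ∈ Icc 1 r, v ≤ b j + j := by
  by_cases hall : ∀ i ∈ Icc 1 r, r ≤ a i + i
  · exact ⟨r, 1, hr, le_rfl, rfl, hall, fun j hj => by simp at hj; omega⟩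
  push Not at hall
  obtain ⟨i₀, hi₀, hlt⟩ := hall
  obtain ⟨m, hm, hmin⟩ := exists_min_image (Icc 1 r) (fun i => a i + i) ⟨i₀, hi₀⟩
  have hmlt : a m + m < r := (hmin i₀ hi₀).trans_lt hlt
  have hm' := mem_Icc.1 hm
  refine ⟨a m + m, r + 1 - (a m + m), by omega, by omega, by omega, hmin, fun j hj => ?_⟩
  have hj' := mem_Icc.1 hj
  by_cases hjm : j ≤ r + 1 - m
  · have := h m hm j (mem_Icc.2 ⟨hj'.1, hjm⟩)
    omega
  · omega

theorem tightIndices_product_subset_weaklyFixed {r u v : ℕ} (a b : ℕ → ℕ)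
    (hu : 1 ≤ u) (hv : 1 ≤ v) (huv : u + v = r + 1) :
    tightIndices a u ×ˢ tightIndices b v ⊆ weaklyFixed r a b := by
  intro ⟨i, j⟩ hij
  simp only [tightIndices, weaklyFixed, mem_product, mem_filter, mem_Icc] at hij ⊢
  omega

theorem le_mul_of_quadratic_budget_of_le {H D u v p q t : ℤ} (hDH : D ≤ H) (hHD : H ≤ D + 1)
    (huv : u + v = H + D + 1) (hu_le_v : u ≤ v) (ht : 0 ≤ t) (hp : 0 ≤ p) (hpu : p ≤ u)
    (hqv : q ≤ v)
    (hbudget : u * (u + 1) + v * (v + 1) + 2 * t ≤ (H + 1) * H + (D + 1) * D + 2 * (p + q)) :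
    t * (D + 1) ≤ p * q := by
  obtain ⟨k, rfl⟩ : ∃ k, u = H - k := ⟨H - u, by ring⟩
  obtain ⟨e, rfl⟩ : ∃ e, H = D + 1 - e := ⟨D + 1 - H, by ring⟩
  obtain rfl : v = D + 1 + k := by linarith
  have hk : 0 ≤ k := by omega
  have hkk : 0 ≤ k * (k + e - 1) := by
    rcases hk.eq_or_lt with rfl | hk1
    · simp
    · exact mul_nonneg hk (by omega)
  -- The budget says `p + q ≥ S`, and on `S - v ≤ p ≤ v` (here `v = D + 1 + k`)
  -- the product `p (S - p)` is least at `p = S - v`.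
  set S := t + D + 1 + k * k + k * e
  have hS : S ≤ p + q := by nlinarith
  have hpS : S - (D + 1 + k) ≤ p := by linarith
  calc t * (D + 1) ≤ (S - (D + 1 + k)) * (D + 1 + k) := by nlinarith [mul_nonneg ht hk]
    _ ≤ p * (S - p) := by
      nlinarith [mul_nonneg (sub_nonneg.2 hpS) (by linarith : (0 : ℤ) ≤ D + 1 + k - p)]
    _ ≤ p * q := by nlinarith

theorem le_mul_of_quadratic_budget {H D u v p q t : ℤ} (hDH : D ≤ H) (hHD : H ≤ D + 1)
    (huv : u + v = H + D + 1) (ht : 0 ≤ t) (hp : 0 ≤ p) (hpu : p ≤ u)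
    (hq : 0 ≤ q) (hqv : q ≤ v)
    (hbudget : u * (u + 1) + v * (v + 1) + 2 * t ≤ (H + 1) * H + (D + 1) * D + 2 * (p + q)) :
    t * (D + 1) ≤ p * q := by
  rcases le_total u v with huv' | hvu
  · exact le_mul_of_quadratic_budget_of_le hDH hHD huv huv' ht hp hpu hqv hbudget
  · rw [mul_comm p]
    exact le_mul_of_quadratic_budget_of_le hDH hHD (by linarith) hvu ht hq hqv hpu (by linarith)

theorem weakly_fixed_count_general (r t : ℕ) (ht : t ≤ (r + 1) / 2)
    (a b : ℕ → ℕ)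
    (hN : ∑ i ∈ Finset.Icc 1 r, a i + ∑ j ∈ Finset.Icc 1 r, b j
      = Nat.choose ((r + 1) / 2 + 1) 2 + Nat.choose (r / 2 + 1) 2 - t)
    (h : ∀ i ∈ Finset.Icc 1 r, ∀ j ∈ Finset.Icc 1 (r + 1 - i),
      r + 1 ≤ a i + b j + i + j) :
    t * (r / 2 + 1)
      ≤ ((((Finset.Icc 1 r) ×ˢ (Finset.Icc 1 r)).filter (fun ij =>
          ij.1 + ij.2 ≤ r + 1 ∧ a ij.1 + b ij.2 + ij.1 + ij.2 = r + 1)).card) := by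
  rcases Nat.eq_zero_or_pos t with rfl | ht₀
  · simp
  obtain ⟨u, v, hu, hv, huv, hua, hvb⟩ := exists_tight_split (by omega) h
  have hA := mul_succ_le_two_mul_sum_add_card_tightIndices a (by omega) hua
  have hB := mul_succ_le_two_mul_sum_add_card_tightIndices b (by omega) hvb
  have hcard : #(tightIndices a u) * #(tightIndices b v) ≤ #(weaklyFixed r a b) :=
    card_product _ _ ▸ card_le_card (tightIndices_product_subset_weaklyFixed a b hu hv huv)
  have hH := two_mul_choose_two_succ ((r + 1) / 2)
  have hD := two_mul_choose_two_succ (r / 2)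
  have htH : 2 * t ≤ ((r + 1) / 2 + 1) * ((r + 1) / 2) := by nlinarith
  have hbudget : u * (u + 1) + v * (v + 1) + 2 * t ≤ ((r + 1) / 2 + 1) * ((r + 1) / 2) +
      (r / 2 + 1) * (r / 2) + 2 * (#(tightIndices a u) + #(tightIndices b v)) := by
    omega
  refine le_trans ?_ hcard
  exact_mod_cast le_mul_of_quadratic_budget (H := ((r + 1) / 2 : ℕ)) (D := (r / 2 : ℕ))
    (u := u) (v := v) (p := #(tightIndices a u)) (q := #(tightIndices b v)) (t := t)
    (by omega) (by omega) (by omega)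
    (by positivity) (by positivity) (by exact_mod_cast card_tightIndices_le a u) (by positivity)
    (by exact_mod_cast card_tightIndices_le b v) (by exact_mod_cast hbudget)

theorem weakly_fixed_count (r t : ℕ) (hr : 1 ≤ r) (ht : t ≤ (r + 1) / 2)
    (a b : ℕ → ℕ)
    (hN : ∑ i ∈ Finset.Icc 1 r, a i + ∑ j ∈ Finset.Icc 1 r, b j
      = Nat.choose ((r + 1) / 2 + 1) 2 + Nat.choose (r / 2 + 1) 2 - t)
    (h : ∀ i ∈ Finset.Icc 1 r, ∀ j ∈ Finset.Icc 1 (r + 1 - i),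
      r + 1 ≤ a i + b j + i + j) :
    t * (r / 2 + 1)
      ≤ ((((Finset.Icc 1 r) ×ˢ (Finset.Icc 1 r)).filter (fun ij =>
          ij.1 + ij.2 ≤ r + 1 ∧ a ij.1 + b ij.2 + ij.1 + ij.2 = r + 1)).card) :=
  weakly_fixed_count_general r t ht a b hN h
end

section
/- Let r ≥ 2, let S be the set of pairs (i,j) with i ∈ [r], j ∈ [r+1−i], and fix integers r_1 = ⌈r/2⌉, r_2 = ⌊r/2⌋. Define a_i = r_1 − i + 1 for 1 ≤ i ≤ r_1 and a_i = 0 otherwise, and b_j = r_2 − j + 1 for 1 ≤ j ≤ r_2 and b_j = 0 otherwise (corresponding to making rows 1..r_1+1 pairwise 0-non-edges and the last r_2+1 rows pairwise 1-non-edges). Then ∑ a_i + ∑ b_j = binom(r_1+1, 2) + binom(r_2+1, 2) = N_r, and a_i + b_j ≥ r + 2 − i − j for all (i,j) ∈ S (every scarce pair is fixed). -/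
open Finset

/-!
With `r₁ = ⌈r/2⌉` and `r₂ = ⌊r/2⌋`, both `a` and `b` are staircases, so their sums are the
triangular numbers `binom(r₁+1, 2)` and `binom(r₂+1, 2)`. For the covering inequality, note that
`a_i + i ≥ r₁ + 1` for every `i` (with equality on the staircase) and likewise `b_j + j ≥ r₂ + 1`;
adding these gives `a_i + b_j + i + j ≥ r₁ + r₂ + 2 = r + 2`.
-/

theorem sum_Icc_one_tsub_eq_choose_two (m : ℕ) :
    ∑ i ∈ Icc 1 m, (m + 1 - i) = (m + 1).choose 2 := by
  rw [← Nat.sum_Icc_choose]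
  refine sum_nbij' (m + 1 - ·) (m + 1 - ·) ?_ ?_ ?_ ?_ fun _ _ ↦ (Nat.choose_one_right _).symm <;>
    intro i hi <;> simp only [mem_Icc] at hi ⊢ <;> omega

theorem sum_Icc_ite_le_of_le {r m : ℕ} (h : m ≤ r) (f : ℕ → ℕ) :
    ∑ i ∈ Icc 1 r, (if i ≤ m then f i else 0) = ∑ i ∈ Icc 1 m, f i := by
  rw [← sum_filter]
  congr 1
  ext i
  simp only [mem_filter, mem_Icc]
  omega

theorem succ_le_ite_tsub_add_self (m i : ℕ) :
    m + 1 ≤ (if i ≤ m then m + 1 - i else 0) + i := by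
  split_ifs <;> omega

theorem construction_fixes_all_general (r : ℕ) :
    (∑ i ∈ Finset.Icc 1 r, (if i ≤ (r + 1) / 2 then (r + 1) / 2 + 1 - i else 0))
        + (∑ j ∈ Finset.Icc 1 r, (if j ≤ r / 2 then r / 2 + 1 - j else 0))
      = Nat.choose ((r + 1) / 2 + 1) 2 + Nat.choose (r / 2 + 1) 2 ∧
    ∀ i ∈ Finset.Icc 1 r, ∀ j ∈ Finset.Icc 1 (r + 1 - i),
      r + 2 ≤ (if i ≤ (r + 1) / 2 then (r + 1) / 2 + 1 - i else 0)
        + (if j ≤ r / 2 then r / 2 + 1 - j else 0) + i + j := by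
  refine ⟨?_, fun i _ j _ ↦ ?_⟩
  · rw [sum_Icc_ite_le_of_le (by omega), sum_Icc_ite_le_of_le (by omega),
      sum_Icc_one_tsub_eq_choose_two, sum_Icc_one_tsub_eq_choose_two]
  · have hrow := succ_le_ite_tsub_add_self ((r + 1) / 2) i
    have hcol := succ_le_ite_tsub_add_self (r / 2) j
    omega

theorem construction_fixes_all (r : ℕ) (hr : 2 ≤ r) :
    (∑ i ∈ Finset.Icc 1 r, (if i ≤ (r + 1) / 2 then (r + 1) / 2 + 1 - i else 0))
        + (∑ j ∈ Finset.Icc 1 r, (if j ≤ r / 2 then r / 2 + 1 - j else 0))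
      = Nat.choose ((r + 1) / 2 + 1) 2 + Nat.choose (r / 2 + 1) 2 ∧
    ∀ i ∈ Finset.Icc 1 r, ∀ j ∈ Finset.Icc 1 (r + 1 - i),
      r + 2 ≤ (if i ≤ (r + 1) / 2 then (r + 1) / 2 + 1 - i else 0)
        + (if j ≤ r / 2 then r / 2 + 1 - j else 0) + i + j :=
  construction_fixes_all_general r
end
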